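/- Let m ≥ 2, β ∈ (1/m, 1), and let (γ_ℓ) ∈ {0,…,m−1}^ℕ be an infinite expansion of 1 in base β (i.e., Σ γ_ℓ β^ℓ = 1 with infinitely many nonzero terms). Then (γ_ℓ) is the quasi-greedy expansion of 1 if and only if for every k ≥ 1, the shifted sequence γ_{k+1} γ_{k+2} … is ≤ γ_1 γ_2 … in the lexicographical order. -/

import Mathlib

/-!
Write `V d = ∑ dₙ β^(n+1)`; both conditions are equivalent to every tail of `γ` having value at
most `1`. Suppose they are, and an infinite expansion `b` first exceeds `γ` at position `n`. Then
`V b - V γ ≥ β^(n+1) (1 + V (tail of b) - V (tail of γ)) > 0`, as the tail of `γ` is worth at most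
`1` and that of `b` is positive. Applied to other expansions of `1` this is lexicographic
maximality, applied to the shifts of `γ` it is the shift condition. Conversely, under the shift
condition the same comparison bounds the supremum `S` of the tail values by `1 + β (S - 1)`, so
`S ≤ 1`; and the quasi-greedy algorithm yields an infinite expansion of `1` whose tails are worth
its remainders, all in `(0, 1]`, so a lexicographically maximal `γ` must be that expansion.
-/

def LexLt (a b : ℕ → ℕ) : Prop := ∃ n, (∀ m < n, a m = b m) ∧ a n < b n

def LexLe (a b : ℕ → ℕ) : Prop := a = b ∨ LexLt a b

def IsExpansionOf1 (m : ℕ) (β : ℝ) (d : ℕ → ℕ) : Prop :=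
  (∀ n, d n < m) ∧ (∑' n, (d n : ℝ) * β ^ (n + 1)) = 1

def IsInfiniteExp (d : ℕ → ℕ) : Prop := ∀ n, ∃ k ≥ n, d k ≠ 0

def IsQuasiGreedy (m : ℕ) (β : ℝ) (d : ℕ → ℕ) : Prop :=
  IsExpansionOf1 m β d ∧ IsInfiniteExp d ∧
    ∀ e, IsExpansionOf1 m β e → IsInfiniteExp e → LexLe e d

open Finset Filter Topology

noncomputable def expansionValue (β : ℝ) (d : ℕ → ℕ) : ℝ := ∑' n, (d n : ℝ) * β ^ (n + 1)

def shift (d : ℕ → ℕ) (k : ℕ) : ℕ → ℕ := fun n => d (n + k)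

@[simp]
theorem shift_shift (d : ℕ → ℕ) (j k : ℕ) : shift (shift d k) j = shift d (j + k) := by
  funext n
  simp only [shift, add_assoc]

theorem lexLt_iff_toLex_lt {a b : ℕ → ℕ} : LexLt a b ↔ toLex a < toLex b := Iff.rfl

theorem lexLe_iff_toLex_le {a b : ℕ → ℕ} : LexLe a b ↔ toLex a ≤ toLex b := by
  rw [LexLe, lexLt_iff_toLex_lt, le_iff_eq_or_lt, toLex_inj]
  exact Iff.rfl

theorem lexLe_or_lexLt (a b : ℕ → ℕ) : LexLe a b ∨ LexLt b a := by
  rw [lexLe_iff_toLex_le, lexLt_iff_toLex_lt]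
  exact le_or_gt _ _

theorem LexLe.antisymm {a b : ℕ → ℕ} (hab : LexLe a b) (hba : LexLe b a) : a = b := by
  rw [lexLe_iff_toLex_le] at hab hba
  exact toLex_inj.mp (le_antisymm hab hba)

theorem IsInfiniteExp.shift {d : ℕ → ℕ} (hd : IsInfiniteExp d) (k : ℕ) :
    IsInfiniteExp (shift d k) := by
  intro n
  obtain ⟨j, hj, hdj⟩ := hd (n + k)
  exact ⟨j - k, by omega, by rwa [_root_.shift, Nat.sub_add_cancel (by omega)]⟩

section ExpansionValue

variable {m : ℕ} {β : ℝ} {d : ℕ → ℕ}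

theorem summable_expansion (hβ0 : 0 ≤ β) (hβ1 : β < 1) (hd : ∀ n, d n < m) :
    Summable (fun n => (d n : ℝ) * β ^ (n + 1)) := by
  refine Summable.of_nonneg_of_le (fun n => by positivity) (fun n => ?_)
    ((summable_geometric_of_lt_one hβ0 hβ1).mul_left ((m : ℝ) * β))
  rw [pow_succ, mul_comm (β ^ n), ← mul_assoc]
  gcongr
  exact_mod_cast (hd n).le

theorem expansionValue_nonneg (hβ0 : 0 ≤ β) : 0 ≤ expansionValue β d :=
  tsum_nonneg fun n => by positivity

theorem expansionValue_pos (hβ0 : 0 < β) (hβ1 : β < 1) (hd : ∀ n, d n < m)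
    (hinf : IsInfiniteExp d) : 0 < expansionValue β d := by
  obtain ⟨k, -, hk⟩ := hinf 0
  have hterm : 0 < (d k : ℝ) * β ^ (k + 1) := by
    have : (0 : ℝ) < d k := by exact_mod_cast Nat.pos_of_ne_zero hk
    positivity
  exact hterm.trans_le <|
    (summable_expansion hβ0.le hβ1 hd).le_tsum k fun j _ => by positivity

theorem bddAbove_expansionValue_shift (hβ0 : 0 ≤ β) (hβ1 : β < 1) (hd : ∀ n, d n < m) :
    BddAbove (Set.range fun k => expansionValue β (shift d k)) := by
  refine ⟨∑' n, (m : ℝ) * β ^ (n + 1), ?_⟩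
  rintro _ ⟨k, rfl⟩
  refine (summable_expansion hβ0 hβ1 fun n => hd (n + k)).tsum_le_tsum (fun n => ?_)
    (summable_expansion hβ0 hβ1 fun _ => Nat.lt_succ_self m)
  gcongr
  exact_mod_cast (hd (n + k)).le

theorem expansionValue_eq_sum_add_shift (hβ0 : 0 ≤ β) (hβ1 : β < 1) (hd : ∀ n, d n < m)
    (k : ℕ) :
    expansionValue β d = ∑ i ∈ range k, (d i : ℝ) * β ^ (i + 1)
      + β ^ k * expansionValue β (shift d k) := by
  rw [expansionValue, ← (summable_expansion hβ0 hβ1 hd).sum_add_tsum_nat_add k,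
    expansionValue, ← tsum_mul_left]
  congr 1
  refine tsum_congr fun n => ?_
  rw [shift, show n + k + 1 = k + (n + 1) by omega, pow_add]
  ring

theorem expansionValue_add_le_of_lt {a b : ℕ → ℕ} (hβ0 : 0 ≤ β) (hβ1 : β < 1)
    (ha : ∀ n, a n < m) (hb : ∀ n, b n < m) {n : ℕ} (hagree : ∀ i < n, a i = b i)
    (hlt : a n < b n) :
    expansionValue β a + β ^ (n + 1) *
        (1 + expansionValue β (shift b (n + 1)) - expansionValue β (shift a (n + 1))) ≤
      expansionValue β b := by
  rw [expansionValue_eq_sum_add_shift hβ0 hβ1 ha (n + 1),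
    expansionValue_eq_sum_add_shift hβ0 hβ1 hb (n + 1), sum_range_succ, sum_range_succ,
    sum_congr rfl fun i hi => by rw [hagree i (mem_range.mp hi)]]
  have hdigit : ((a n : ℝ) + 1) * β ^ (n + 1) ≤ b n * β ^ (n + 1) := by
    gcongr
    exact_mod_cast hlt
  linarith

end ExpansionValue

section Characterization

variable {m : ℕ} {β : ℝ} {γ : ℕ → ℕ}

theorem lexLe_of_expansionValue_shift_le_one (hβ0 : 0 < β) (hβ1 : β < 1)
    (hγ : ∀ n, γ n < m) (hγtail : ∀ k, expansionValue β (shift γ k) ≤ 1) {b : ℕ → ℕ}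
    (hb : ∀ n, b n < m) (hbinf : IsInfiniteExp b)
    (hbγ : expansionValue β b ≤ expansionValue β γ) : LexLe b γ := by
  rcases lexLe_or_lexLt b γ with h | ⟨n, hagree, hlt⟩
  · exact h
  have hcmp := expansionValue_add_le_of_lt hβ0.le hβ1 hγ hb hagree hlt
  have hbtail := expansionValue_pos (d := shift b (n + 1)) hβ0 hβ1 (fun j => hb _)
    (hbinf.shift (n + 1))
  have hgain : 0 < β ^ (n + 1) * (1 + expansionValue β (shift b (n + 1))
      - expansionValue β (shift γ (n + 1))) :=
    mul_pos (pow_pos hβ0 _) (by linarith [hγtail (n + 1)])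
  linarith

theorem expansionValue_shift_le_one_of_shift_lexLe (hβ0 : 0 ≤ β) (hβ1 : β < 1)
    (hγ : ∀ n, γ n < m) (hγ1 : expansionValue β γ ≤ 1)
    (hshift : ∀ k, 1 ≤ k → LexLe (shift γ k) γ) (k : ℕ) :
    expansionValue β (shift γ k) ≤ 1 := by
  have hbdd := bddAbove_expansionValue_shift hβ0 hβ1 hγ
  set S := ⨆ k, expansionValue β (shift γ k)
  suffices S ≤ 1 from (le_ciSup hbdd k).trans this
  by_contra! hS
  have key : ∀ k, expansionValue β (shift γ k) ≤ 1 + β * (S - 1) := by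
    intro k
    have hk : LexLe (shift γ k) γ := by
      rcases Nat.eq_zero_or_pos k with rfl | hk
      · exact Or.inl rfl
      · exact hshift k hk
    rcases hk with heq | ⟨n, hagree, hlt⟩
    · rw [heq]
      nlinarith
    have hcmp := expansionValue_add_le_of_lt (a := shift γ k) hβ0 hβ1 (fun j => hγ _) hγ
      hagree hlt
    have hrest : expansionValue β (shift (shift γ k) (n + 1)) ≤ S := by
      rw [shift_shift]
      exact le_ciSup hbdd _
    have hpow : β ^ (n + 1) * (S - 1) ≤ β * (S - 1) := by
      gcongr
      exact pow_le_of_le_one hβ0 hβ1.le (Nat.succ_ne_zero n)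
    have hloss : β ^ (n + 1) * (1 - S) ≤ β ^ (n + 1) * (1 + expansionValue β (shift γ (n + 1))
        - expansionValue β (shift (shift γ k) (n + 1))) := by
      gcongr
      linarith [expansionValue_nonneg (d := shift γ (n + 1)) hβ0]
    linarith
  nlinarith [ciSup_le key]

end Characterization

section QuasiGreedy

variable {m : ℕ} {β : ℝ}

theorem pos_of_one_lt_natCast_mul (hmβ : 1 < m * β) : 0 < m :=
  Nat.pos_of_ne_zero fun h => by simp only [h, Nat.cast_zero, zero_mul] at hmβ; linarith

/-- For `x > 0`, the largest digit `j < m` with `j β < x`. -/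
noncomputable def quasiGreedyDigit (m : ℕ) (β x : ℝ) : ℕ := min (m - 1) (⌈x / β⌉₊ - 1)

noncomputable def quasiGreedyRemainder (m : ℕ) (β : ℝ) : ℕ → ℝ
  | 0 => 1
  | n + 1 => quasiGreedyRemainder m β n / β - quasiGreedyDigit m β (quasiGreedyRemainder m β n)

noncomputable def quasiGreedyExpansion (m : ℕ) (β : ℝ) (n : ℕ) : ℕ :=
  quasiGreedyDigit m β (quasiGreedyRemainder m β n)

theorem quasiGreedyExpansion_lt (hm : 0 < m) (n : ℕ) : quasiGreedyExpansion m β n < m :=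
  (min_le_left _ _).trans_lt (Nat.sub_lt hm one_pos)

theorem quasiGreedyDigit_mul_lt (hβ0 : 0 < β) {x : ℝ} (hx : 0 < x) :
    (quasiGreedyDigit m β x : ℝ) * β < x := by
  have hceil : 1 ≤ ⌈x / β⌉₊ := Nat.one_le_ceil_iff.mpr (div_pos hx hβ0)
  have hdigit : (quasiGreedyDigit m β x : ℝ) ≤ (⌈x / β⌉₊ : ℝ) - 1 := by
    rw [← Nat.cast_one, ← Nat.cast_sub hceil]
    exact_mod_cast min_le_right _ _
  rw [← lt_div_iff₀ hβ0]
  linarith [Nat.ceil_lt_add_one (div_pos hx hβ0).le]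

theorem div_sub_quasiGreedyDigit_le_one (hβ0 : 0 < β) (hmβ : 1 < m * β) {x : ℝ} (hx : 0 < x)
    (hx1 : x ≤ 1) : x / β - quasiGreedyDigit m β x ≤ 1 := by
  have hceil : 1 ≤ ⌈x / β⌉₊ := Nat.one_le_ceil_iff.mpr (div_pos hx hβ0)
  rcases le_total (⌈x / β⌉₊ - 1) (m - 1) with hc | hc
  · rw [quasiGreedyDigit, min_eq_right hc, Nat.cast_sub hceil, Nat.cast_one]
    linarith [Nat.le_ceil (x / β)]
  · rw [quasiGreedyDigit, min_eq_left hc, Nat.cast_sub (pos_of_one_lt_natCast_mul hmβ),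
      Nat.cast_one, sub_le_iff_le_add, div_le_iff₀ hβ0]
    nlinarith

theorem quasiGreedyRemainder_mem_Ioc (hβ0 : 0 < β) (hmβ : 1 < m * β) (n : ℕ) :
    quasiGreedyRemainder m β n ∈ Set.Ioc 0 1 := by
  induction n with
  | zero => simp [quasiGreedyRemainder]
  | succ n ih =>
    refine ⟨?_, div_sub_quasiGreedyDigit_le_one hβ0 hmβ ih.1 ih.2⟩
    rw [quasiGreedyRemainder, sub_pos, lt_div_iff₀ hβ0]
    exact quasiGreedyDigit_mul_lt hβ0 ih.1

theorem sum_quasiGreedyExpansion (hβ0 : 0 < β) (n : ℕ) :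
    ∑ i ∈ range n, (quasiGreedyExpansion m β i : ℝ) * β ^ (i + 1) =
      1 - β ^ n * quasiGreedyRemainder m β n := by
  induction n with
  | zero => simp [quasiGreedyRemainder]
  | succ n ih =>
    rw [sum_range_succ, ih, quasiGreedyExpansion, quasiGreedyRemainder]
    field_simp
    ring

theorem expansionValue_shift_quasiGreedyExpansion (hβ0 : 0 < β) (hβ1 : β < 1)
    (hmβ : 1 < m * β) (k : ℕ) :
    expansionValue β (shift (quasiGreedyExpansion m β) k) = quasiGreedyRemainder m β k := by
  have hrem := quasiGreedyRemainder_mem_Ioc hβ0 hmβ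
  have hvalue : expansionValue β (quasiGreedyExpansion m β) = 1 := by
    refine ((hasSum_iff_tendsto_nat_of_nonneg (fun n => by positivity) 1).mpr ?_).tsum_eq
    simp only [sum_quasiGreedyExpansion hβ0]
    have hlim : Tendsto (fun n => β ^ n * quasiGreedyRemainder m β n) atTop (𝓝 0) :=
      squeeze_zero (fun n => mul_nonneg (pow_nonneg hβ0.le n) (hrem n).1.le)
        (fun n => mul_le_of_le_one_right (pow_nonneg hβ0.le n) (hrem n).2)
        (tendsto_pow_atTop_nhds_zero_of_lt_one hβ0.le hβ1)
    simpa using hlim.const_sub 1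
  have hsplit := expansionValue_eq_sum_add_shift hβ0.le hβ1
    (quasiGreedyExpansion_lt (β := β) (pos_of_one_lt_natCast_mul hmβ)) k
  rw [hvalue, sum_quasiGreedyExpansion hβ0] at hsplit
  exact mul_left_cancel₀ (pow_pos hβ0 k).ne' (by linarith)

theorem exists_expansionOf1_shift_le_one (hβ0 : 0 < β) (hβ1 : β < 1) (hmβ : 1 < m * β) :
    ∃ δ, IsExpansionOf1 m β δ ∧ IsInfiniteExp δ ∧ ∀ k, expansionValue β (shift δ k) ≤ 1 := by
  have hm := pos_of_one_lt_natCast_mul hmβ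
  have htail := expansionValue_shift_quasiGreedyExpansion hβ0 hβ1 hmβ
  have hrem := quasiGreedyRemainder_mem_Ioc hβ0 hmβ
  refine ⟨quasiGreedyExpansion m β, ⟨quasiGreedyExpansion_lt hm, htail 0⟩, fun n => ?_,
    fun k => (htail k).trans_le (hrem k).2⟩
  by_contra! hzero
  have hshift : shift (quasiGreedyExpansion m β) n = 0 := funext fun j => hzero (j + n) (by omega)
  have hvalue : expansionValue β (shift (quasiGreedyExpansion m β) n) = 0 := by
    simp [hshift, expansionValue]
  exact (hrem n).1.ne' ((htail n).symm.trans hvalue)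

end QuasiGreedy

theorem stmt10_general (m : ℕ) (β : ℝ) (hβ1 : 1 / (m : ℝ) < β) (hβ2 : β < 1)
    (γ : ℕ → ℕ) (hexp : IsExpansionOf1 m β γ) (hinf : IsInfiniteExp γ) :
    IsQuasiGreedy m β γ ↔ ∀ k, 1 ≤ k → LexLe (fun n => γ (n + k)) γ := by
  have hm : (0 : ℝ) < m := by exact_mod_cast (hexp.1 0).pos
  have hβ0 : 0 < β := (one_div_pos.mpr hm).trans hβ1
  have hmβ : 1 < m * β := by rwa [div_lt_iff₀ hm, mul_comm] at hβ1
  have hmax_of_tails (htail : ∀ k, expansionValue β (shift γ k) ≤ 1) {b : ℕ → ℕ}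
      (hb : ∀ n, b n < m) (hbinf : IsInfiniteExp b) (hbγ : expansionValue β b ≤ 1) :
      LexLe b γ :=
    lexLe_of_expansionValue_shift_le_one hβ0 hβ2 hexp.1 htail hb hbinf (hbγ.trans_eq hexp.2.symm)
  constructor
  · rintro ⟨-, -, hmax⟩ k -
    obtain ⟨δ, hδ, hδinf, hδtail⟩ := exists_expansionOf1_shift_le_one hβ0 hβ2 hmβ
    have hδγ : δ = γ := (hmax δ hδ hδinf).antisymm <|
      lexLe_of_expansionValue_shift_le_one hβ0 hβ2 hδ.1 hδtail hexp.1 hinf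
        (hexp.2.trans hδ.2.symm).le
    subst hδγ
    exact hmax_of_tails hδtail (fun n => hexp.1 _) (hinf.shift k) (hδtail k)
  · intro hshift
    have htail := expansionValue_shift_le_one_of_shift_lexLe hβ0.le hβ2 hexp.1 hexp.2.le hshift
    exact ⟨hexp, hinf, fun e he heinf => hmax_of_tails htail he.1 heinf he.2.le⟩

/-- an infinite expansion (γ_ℓ) of 1 is quasi-greedy iff all its
shifts are lexicographically ≤ the sequence itself. -/
theorem stmt10 (m : ℕ) (hm : 2 ≤ m) (β : ℝ) (hβ1 : 1 / (m : ℝ) < β) (hβ2 : β < 1)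
    (γ : ℕ → ℕ) (hexp : IsExpansionOf1 m β γ) (hinf : IsInfiniteExp γ) :
    IsQuasiGreedy m β γ ↔ ∀ k, 1 ≤ k → LexLe (fun n => γ (n + k)) γ :=
  stmt10_general m β hβ1 hβ2 γ hexp hinf
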